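/- arXiv:q-alg/9605002 — 3 statements merged into one kernel-verified Lean document; each statement's English description precedes it below -/
import Mathlib

section
/- Let 0 < q < 1 and let z > 0 be real. For every integer l ≥ 0, Li_{l+1}(q^z)/(log q)^l = (z^l/l!)·log((1−q)/(1−q^z)) + Σ_{r=0}^{l} ((z−1)^{l−r}/(l−r)!)·L_{r+1} + Σ_{r=1}^{l} ((−1)^r z^{l−r}/(l−r)!)·T_r(z), where L_1 := −log(1−q), L_{r+1} := Li_{r+1}(q)/(log q)^r for r ≥ 1, and T_r(z) := ∫_1^z (ξ^r/r!)·(q^ξ log q/(1−q^ξ)) dξ. -/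
open scoped BigOperators

noncomputable section

/-- Euler's polylogarithm `Li_r(w) = Σ_{k≥1} w^k/k^r` (real version). -/
def Li (r : ℕ) (w : ℝ) : ℝ := ∑' k : ℕ, w ^ (k+1) / ((k:ℝ)+1) ^ r

/-- `L_1 := −log(1−q)` and `L_{r+1} := Li_{r+1}(q)/(log q)^r` for `r ≥ 1`. -/
def Lconst (q : ℝ) : ℕ → ℝ
  | 0 => 0
  | 1 => -Real.log (1 - q)
  | (r+2) => Li (r+2) q / (Real.log q) ^ (r+1)

/-- `T_r(z) := ∫_1^z (ξ^r/r!)·(q^ξ log q/(1−q^ξ)) dξ`. -/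
def Tq (q : ℝ) (r : ℕ) (z : ℝ) : ℝ :=
  ∫ ξ in (1:ℝ)..z, ξ ^ r / r.factorial * (q ^ ξ * Real.log q / (1 - q ^ ξ))

/-! ### Auxiliary lemmas -/

lemma PLaux.summable_aux (r : ℕ) {w : ℝ} (hw : |w| < 1) :
    Summable (fun n : ℕ => w ^ n / ((n:ℝ)+1) ^ r) := by
  apply Summable.of_norm_bounded (summable_geometric_of_lt_one (abs_nonneg w) hw)
  intro n
  have h1 : (1:ℝ) ≤ ((n:ℝ)+1) ^ r := one_le_pow₀ (le_add_of_nonneg_left (Nat.cast_nonneg n))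
  rw [norm_div, Real.norm_eq_abs, Real.norm_eq_abs, abs_pow]
  rw [abs_of_pos (show (0:ℝ) < ((n:ℝ)+1)^r by positivity)]
  calc |w| ^ n / ((n:ℝ)+1) ^ r ≤ |w| ^ n / 1 := by
        apply div_le_div_of_nonneg_left (by positivity) one_pos h1
    _ = |w| ^ n := by ring

lemma PLaux.Li_eq (r : ℕ) (w : ℝ) :
    Li r w = w * ∑' n : ℕ, w ^ n / ((n:ℝ)+1) ^ r := by
  rw [Li, ← tsum_mul_left]
  congr 1; ext n; rw [pow_succ]; ring

lemma PLaux.hasDerivAt_Li (r : ℕ) {w : ℝ} (hw : |w| < 1) :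
    HasDerivAt (Li (r+1)) (∑' n : ℕ, w ^ n / ((n:ℝ)+1) ^ r) w := by
  set a : ℝ := (1 + |w|) / 2 with ha
  have haw : |w| < a := by rw [ha]; linarith
  have ha1 : a < 1 := by rw [ha]; linarith
  have ha0 : 0 ≤ a := le_trans (abs_nonneg w) haw.le
  have := hasDerivAt_tsum_of_isPreconnected
    (u := fun n : ℕ => a ^ n) (g := fun (n : ℕ) (y : ℝ) => y ^ (n+1) / ((n:ℝ)+1) ^ (r+1))
    (g' := fun (n : ℕ) (y : ℝ) => y ^ n / ((n:ℝ)+1) ^ r)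
    (t := Set.Ioo (-a) a) (y₀ := w) (y := w)
    (summable_geometric_of_lt_one ha0 ha1) isOpen_Ioo (convex_Ioo _ _).isPreconnected
    ?_ ?_ ?_ ?_ ?_
  · exact this
  · intro n y _
    have h := (hasDerivAt_pow (n+1) y).div_const (((n:ℝ)+1) ^ (r+1))
    refine h.congr_deriv (Eq.symm ?_)
    have hne : ((n:ℝ)+1) ≠ 0 := by positivity
    push_cast
    rw [pow_succ]
    field_simp
  · intro n y hy
    have hya : |y| ≤ a := by
      rw [abs_le]; exact ⟨hy.1.le, hy.2.le⟩
    have h1 : (1:ℝ) ≤ ((n:ℝ)+1) ^ r := one_le_pow₀ (le_add_of_nonneg_left (Nat.cast_nonneg n))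
    rw [Real.norm_eq_abs, abs_div, abs_pow, abs_of_pos (show (0:ℝ) < ((n:ℝ)+1)^r by positivity)]
    calc |y| ^ n / ((n:ℝ)+1) ^ r ≤ |y| ^ n / 1 :=
          div_le_div_of_nonneg_left (by positivity) one_pos h1
      _ = |y| ^ n := by ring
      _ ≤ a ^ n := pow_le_pow_left₀ (abs_nonneg y) hya n
  · rw [Set.mem_Ioo]; constructor <;> [linarith [neg_abs_le w]; linarith [le_abs_self w]]
  · exact ((PLaux.summable_aux (r+1) hw).mul_left w).congr (fun n => by rw [pow_succ]; ring)
  · rw [Set.mem_Ioo]; constructor <;> [linarith [neg_abs_le w]; linarith [le_abs_self w]]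

lemma PLaux.Li1_eq {w : ℝ} (hw : |w| < 1) : Li 1 w = -Real.log (1 - w) := by
  rw [Li]
  have h := Real.hasSum_pow_div_log_of_abs_lt_one hw
  rw [← h.tsum_eq]
  congr 1; ext n; rw [pow_one]

namespace PLaux

variable {q : ℝ}

lemma hasDerivAt_Li_rpow (hq0 : 0 < q) (hq1 : q < 1) (r : ℕ) {z : ℝ} (hz : 0 < z) :
    HasDerivAt (fun z => Li (r+1) (q ^ z)) (Real.log q * Li r (q ^ z)) z := by
  have hqz0 : 0 < q ^ z := Real.rpow_pos_of_pos hq0 z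
  have hqz1 : q ^ z < 1 := Real.rpow_lt_one hq0.le hq1 hz
  have habs : |q ^ z| < 1 := by rwa [abs_of_pos hqz0]
  have h1 := (hasDerivAt_Li r habs).comp z ((Real.hasStrictDerivAt_const_rpow hq0 z).hasDerivAt)
  refine h1.congr_deriv (Eq.symm ?_)
  rw [Li_eq r (q ^ z)]
  ring

lemma contOn (hq0 : 0 < q) (hq1 : q < 1) (r : ℕ) :
    ContinuousOn (fun ξ : ℝ => ξ ^ r / r.factorial * (q ^ ξ * Real.log q / (1 - q ^ ξ)))
      (Set.Ioi 0) := by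
  have hrq : Continuous fun ξ : ℝ => q ^ ξ := by
    have : (fun ξ : ℝ => q ^ ξ) = fun ξ : ℝ => Real.exp (Real.log q * ξ) := by
      ext ξ; rw [Real.rpow_def_of_pos hq0]
    rw [this]; exact Real.continuous_exp.comp (continuous_const.mul continuous_id)
  apply ContinuousOn.mul
  · exact ((continuous_pow r).continuousOn).div_const _
  · apply ContinuousOn.div
    · exact (hrq.mul continuous_const).continuousOn
    · exact (continuous_const.sub hrq).continuousOn
    · intro x hx
      have : q ^ x < 1 := Real.rpow_lt_one hq0.le hq1 hx
      linarith

lemma hasDerivAt_Tq (hq0 : 0 < q) (hq1 : q < 1) (r : ℕ) {z : ℝ} (hz : 0 < z) :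
    HasDerivAt (Tq q r) (z ^ r / r.factorial * (q ^ z * Real.log q / (1 - q ^ z))) z := by
  have hsub : Set.uIcc (1:ℝ) z ⊆ Set.Ioi 0 := by
    intro x hx
    rcases Set.mem_uIcc.mp hx with h | h
    · exact Set.mem_Ioi.mpr (by linarith [h.1])
    · exact Set.mem_Ioi.mpr (by linarith [h.1])
  apply intervalIntegral.integral_hasDerivAt_right
  · exact ((contOn hq0 hq1 r).mono hsub).intervalIntegrable
  · exact ContinuousOn.stronglyMeasurableAtFilter isOpen_Ioi (contOn hq0 hq1 r) z hz
  · exact (contOn hq0 hq1 r).continuousAt (isOpen_Ioi.mem_nhds hz)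

lemma hasDerivAt_logterm (hq0 : 0 < q) (hq1 : q < 1) {z : ℝ} (hz : 0 < z) :
    HasDerivAt (fun z : ℝ => Real.log ((1 - q) / (1 - q ^ z)))
      (q ^ z * Real.log q / (1 - q ^ z)) z := by
  have hrq : ∀ x : ℝ, HasDerivAt (fun ξ : ℝ => q ^ ξ) (q ^ x * Real.log q) x := fun x =>
    (Real.hasStrictDerivAt_const_rpow hq0 x).hasDerivAt
  have hqz1 : q ^ z < 1 := Real.rpow_lt_one hq0.le hq1 hz
  have h2 : HasDerivAt (fun z : ℝ => Real.log (1 - q) - Real.log (1 - q ^ z))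
      (q ^ z * Real.log q / (1 - q ^ z)) z := by
    have h3 : HasDerivAt (fun ξ : ℝ => 1 - q ^ ξ) (-(q ^ z * Real.log q)) z :=
      ((hrq z).const_sub 1)
    have h4 := h3.log (by linarith)
    have h5 := (hasDerivAt_const z (Real.log (1 - q))).sub h4
    refine h5.congr_deriv (Eq.symm ?_)
    ring
  apply h2.congr_of_eventuallyEq
  filter_upwards [isOpen_Ioi.mem_nhds hz] with x hx
  have hx1 : q ^ x < 1 := Real.rpow_lt_one hq0.le hq1 hx
  rw [Real.log_div (by linarith) (by linarith)]

lemma const_of_hasDerivAt_zero {f : ℝ → ℝ} (h : ∀ x ∈ Set.Ioi (0:ℝ), HasDerivAt f 0 x)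
    {z : ℝ} (hz : 0 < z) : f z = f 1 := by
  apply (convex_Ioi (0:ℝ)).is_const_of_fderivWithin_eq_zero
    (fun x hx => (h x hx).differentiableAt.differentiableWithinAt) ?_ hz (Set.mem_Ioi.mpr one_pos)
  intro x hx
  rw [fderivWithin_of_isOpen isOpen_Ioi hx, (h x hx).hasFDerivAt.fderiv]
  ext y
  simp

/-- The right-hand side of the main identity, as a function. -/
def Rhs (q : ℝ) (l : ℕ) (z : ℝ) : ℝ :=
  z ^ l / l.factorial * Real.log ((1 - q) / (1 - q ^ z))
  + (∑ r ∈ Finset.range (l+1), (z - 1) ^ (l - r) / (l - r).factorial * Lconst q (r+1))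
  + ∑ r ∈ Finset.Icc 1 l, (-1:ℝ) ^ r * z ^ (l - r) / (l - r).factorial * Tq q r z

lemma binom_sum (m : ℕ) :
    ∑ r ∈ Finset.Icc 1 (m+1), ((-1:ℝ)^r / (((m+1-r).factorial : ℝ) * (r.factorial : ℝ)))
      = -(1 / ((m+1).factorial : ℝ)) := by
  have key : ∑ r ∈ Finset.range (m+2),
      ((-1:ℝ)^r / (((m+1-r).factorial : ℝ) * (r.factorial : ℝ))) = 0 := by
    have h1 : ∀ r ∈ Finset.range (m+2),
        ((-1:ℝ)^r / (((m+1-r).factorial : ℝ) * (r.factorial : ℝ)))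
          = ((-1:ℝ)^r * ((m+1).choose r : ℝ)) / ((m+1).factorial : ℝ) := by
      intro r hr
      have hrm : r ≤ m+1 := Nat.lt_succ_iff.mp (Finset.mem_range.mp hr)
      have hc := Nat.choose_mul_factorial_mul_factorial hrm
      have hcR : ((m+1).choose r : ℝ) * (r.factorial : ℝ) * ((m+1-r).factorial : ℝ)
          = ((m+1).factorial : ℝ) := by exact_mod_cast congrArg (Nat.cast (R := ℝ)) hc
      have hne1 : ((m+1-r).factorial : ℝ) ≠ 0 := Nat.cast_ne_zero.mpr (Nat.factorial_ne_zero _)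
      have hne2 : ((r.factorial : ℕ) : ℝ) ≠ 0 := Nat.cast_ne_zero.mpr (Nat.factorial_ne_zero _)
      have hne3 : (((m+1).factorial : ℕ) : ℝ) ≠ 0 := Nat.cast_ne_zero.mpr (Nat.factorial_ne_zero _)
      field_simp
      linear_combination (-1:ℝ) * hcR
    rw [Finset.sum_congr rfl h1, ← Finset.sum_div]
    have h2 : ∑ r ∈ Finset.range (m+2), ((-1:ℝ)^r * ((m+1).choose r : ℝ)) = 0 := by
      have := Int.alternating_sum_range_choose_of_ne (n := m+1) (by omega)
      exact_mod_cast congrArg (Int.cast (R := ℝ)) this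
    rw [h2, zero_div]
  have herase : Finset.Icc 1 (m+1) = (Finset.range (m+2)).erase 0 := by
    ext x; simp [Finset.mem_range, Finset.mem_Icc]; omega
  have h3 := Finset.add_sum_erase (Finset.range (m+2))
    (fun r => ((-1:ℝ)^r / (((m+1-r).factorial : ℝ) * (r.factorial : ℝ))))
    (Finset.mem_range.mpr (by omega : (0:ℕ) < m+2))
  rw [herase]
  have h0 : ((-1:ℝ)^(0:ℕ) / (((m+1-0).factorial : ℝ) * ((0:ℕ).factorial : ℝ)))
      = 1 / ((m+1).factorial : ℝ) := by norm_num
  rw [key] at h3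
  simp only [h0] at h3
  linarith

lemma hasDerivAt_Rhs (hq0 : 0 < q) (hq1 : q < 1) (m : ℕ) {z : ℝ} (hz : 0 < z) :
    HasDerivAt (Rhs q (m+1)) (Rhs q m z) z := by
  have hqz1 : q ^ z < 1 := Real.rpow_lt_one hq0.le hq1 hz
  set f := q ^ z * Real.log q / (1 - q ^ z) with hfdef
  set L := Real.log ((1 - q) / (1 - q ^ z)) with hLdef
  -- term A
  have hA : HasDerivAt (fun z : ℝ => z ^ (m+1) / ((m+1).factorial : ℝ)
        * Real.log ((1 - q) / (1 - q ^ z)))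
      (z ^ m / (m.factorial : ℝ) * L + z ^ (m+1) / ((m+1).factorial : ℝ) * f) z := by
    have h1 := ((hasDerivAt_pow (m+1) z).div_const ((m+1).factorial : ℝ)).mul
      (hasDerivAt_logterm hq0 hq1 hz)
    refine h1.congr_deriv (Eq.symm ?_)
    congr 1
    simp only [Nat.add_sub_cancel, Nat.factorial_succ]
    have hne : (m.factorial : ℝ) ≠ 0 := Nat.cast_ne_zero.mpr (Nat.factorial_ne_zero _)
    push_cast
    field_simp
    ring
  -- term B
  have hB : HasDerivAt (fun z : ℝ => ∑ r ∈ Finset.range (m+2),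
        (z - 1) ^ (m+1-r) / ((m+1-r).factorial : ℝ) * Lconst q (r+1))
      (∑ r ∈ Finset.range (m+1), (z - 1) ^ (m-r) / ((m-r).factorial : ℝ) * Lconst q (r+1)) z := by
    have h1 := HasDerivAt.fun_sum (x := z) (u := Finset.range (m+2))
      (A := fun r z => (z - 1) ^ (m+1-r) / ((m+1-r).factorial : ℝ) * Lconst q (r+1))
      (A' := fun r => ((m+1-r : ℕ) : ℝ) * (z - 1) ^ (m+1-r-1) * 1 / ((m+1-r).factorial : ℝ)
        * Lconst q (r+1))
      (fun r _ => ((((hasDerivAt_id z).sub_const 1).pow (m+1-r)).div_const _).mul_const _)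
    have key : (∑ r ∈ Finset.range (m+2), ((m+1-r : ℕ) : ℝ) * (z - 1) ^ (m+1-r-1) * 1
          / ((m+1-r).factorial : ℝ) * Lconst q (r+1))
        = ∑ r ∈ Finset.range (m+1), (z - 1) ^ (m-r) / ((m-r).factorial : ℝ) * Lconst q (r+1) := by
      rw [Finset.sum_range_succ]
      simp only [Nat.sub_self, Nat.cast_zero, zero_mul, zero_div, mul_zero, add_zero]
      apply Finset.sum_congr rfl
      intro r hr
      have hrm : r ≤ m := Nat.lt_succ_iff.mp (Finset.mem_range.mp hr)
      have h2 : m+1-r = (m-r)+1 := by omega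
      rw [h2]
      simp only [Nat.add_sub_cancel, Nat.factorial_succ]
      generalize m - r = k
      have hne : (k.factorial : ℝ) ≠ 0 := Nat.cast_ne_zero.mpr (Nat.factorial_ne_zero _)
      push_cast
      field_simp
    refine h1.congr_deriv (Eq.symm ?_)
    exact key.symm
  -- term C
  have hC : HasDerivAt (fun z : ℝ => ∑ r ∈ Finset.Icc 1 (m+1),
        (-1:ℝ) ^ r * z ^ (m+1-r) / ((m+1-r).factorial : ℝ) * Tq q r z)
      ((∑ r ∈ Finset.Icc 1 m, (-1:ℝ) ^ r * z ^ (m-r) / ((m-r).factorial : ℝ) * Tq q r z)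
        - z ^ (m+1) / ((m+1).factorial : ℝ) * f) z := by
    have h1 := HasDerivAt.fun_sum (x := z) (u := Finset.Icc 1 (m+1))
      (A := fun r z => (-1:ℝ) ^ r * z ^ (m+1-r) / ((m+1-r).factorial : ℝ) * Tq q r z)
      (A' := fun r => ((-1:ℝ) ^ r * (((m+1-r : ℕ) : ℝ) * z ^ (m+1-r-1)) / ((m+1-r).factorial : ℝ))
          * Tq q r z
        + ((-1:ℝ) ^ r * z ^ (m+1-r) / ((m+1-r).factorial : ℝ))
          * (z ^ r / (r.factorial : ℝ) * (q ^ z * Real.log q / (1 - q ^ z))))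
      (fun r _ => (((hasDerivAt_pow (m+1-r) z).const_mul ((-1:ℝ)^r)).div_const _).mul
        (hasDerivAt_Tq hq0 hq1 r hz))
    refine h1.congr_deriv (Eq.symm ?_)
    rw [Finset.sum_add_distrib]
    have e1 : ∑ r ∈ Finset.Icc 1 (m+1),
        ((-1:ℝ) ^ r * (((m+1-r : ℕ) : ℝ) * z ^ (m+1-r-1)) / ((m+1-r).factorial : ℝ)) * Tq q r z
        = ∑ r ∈ Finset.Icc 1 m, (-1:ℝ) ^ r * z ^ (m-r) / ((m-r).factorial : ℝ) * Tq q r z := by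
      have hins : Finset.Icc 1 (m+1) = insert (m+1) (Finset.Icc 1 m) := by
        ext x; simp only [Finset.mem_Icc, Finset.mem_insert]; omega
      rw [hins, Finset.sum_insert (by simp [Finset.mem_Icc])]
      simp only [Nat.sub_self, Nat.cast_zero, zero_mul, mul_zero, zero_div, zero_add]
      apply Finset.sum_congr rfl
      intro r hr
      have hrm : r ≤ m := (Finset.mem_Icc.mp hr).2
      have h2 : m+1-r = (m-r)+1 := by omega
      rw [h2]
      simp only [Nat.add_sub_cancel, Nat.factorial_succ]
      generalize m - r = k
      have hne : (k.factorial : ℝ) ≠ 0 := Nat.cast_ne_zero.mpr (Nat.factorial_ne_zero _)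
      push_cast
      field_simp
    have e2 : ∑ r ∈ Finset.Icc 1 (m+1),
        ((-1:ℝ) ^ r * z ^ (m+1-r) / ((m+1-r).factorial : ℝ))
          * (z ^ r / (r.factorial : ℝ) * (q ^ z * Real.log q / (1 - q ^ z)))
        = -(z ^ (m+1) / ((m+1).factorial : ℝ) * f) := by
      have h4 : ∀ r ∈ Finset.Icc 1 (m+1),
          ((-1:ℝ) ^ r * z ^ (m+1-r) / ((m+1-r).factorial : ℝ))
            * (z ^ r / (r.factorial : ℝ) * (q ^ z * Real.log q / (1 - q ^ z)))
          = ((-1:ℝ)^r / (((m+1-r).factorial : ℝ) * (r.factorial : ℝ)))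
            * (z ^ (m+1) * (q ^ z * Real.log q / (1 - q ^ z))) := by
        intro r hr
        have hrm : r ≤ m+1 := (Finset.mem_Icc.mp hr).2
        have hzz : z ^ (m+1-r) * z ^ r = z ^ (m+1) := by
          rw [← pow_add, Nat.sub_add_cancel hrm]
        have h5 : ((-1:ℝ) ^ r * z ^ (m+1-r) / ((m+1-r).factorial : ℝ))
            * (z ^ r / (r.factorial : ℝ) * (q ^ z * Real.log q / (1 - q ^ z)))
            = ((-1:ℝ)^r / (((m+1-r).factorial : ℝ) * (r.factorial : ℝ)))
            * ((z ^ (m+1-r) * z ^ r) * (q ^ z * Real.log q / (1 - q ^ z))) := by ring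
        rw [h5, hzz]
      rw [Finset.sum_congr rfl h4, ← Finset.sum_mul, binom_sum]
      rw [hfdef]
      ring
    rw [e1, e2]
    ring
  -- combine
  have hsum := (hA.add hB).add hC
  have hfin : (z ^ m / (m.factorial : ℝ) * L + z ^ (m+1) / ((m+1).factorial : ℝ) * f)
      + (∑ r ∈ Finset.range (m+1), (z - 1) ^ (m-r) / ((m-r).factorial : ℝ) * Lconst q (r+1))
      + ((∑ r ∈ Finset.Icc 1 m, (-1:ℝ) ^ r * z ^ (m-r) / ((m-r).factorial : ℝ) * Tq q r z)
        - z ^ (m+1) / ((m+1).factorial : ℝ) * f) = Rhs q m z := by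
    rw [Rhs, hLdef]
    ring
  rw [← hfin]
  exact hsum

lemma Rhs_one (hq0 : 0 < q) (hq1 : q < 1) (l : ℕ) : Rhs q l 1 = Lconst q (l+1) := by
  rw [Rhs]
  have h1 : q ^ (1:ℝ) = q := Real.rpow_one q
  have hne : (1:ℝ) - q ≠ 0 := by linarith
  have hT : ∀ r : ℕ, Tq q r 1 = 0 := fun r => intervalIntegral.integral_same
  have ht1 : (1:ℝ) ^ l / (l.factorial : ℝ) * Real.log ((1 - q) / (1 - q ^ (1:ℝ))) = 0 := by
    rw [h1, div_self hne, Real.log_one, mul_zero]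
  have ht3 : ∑ r ∈ Finset.Icc 1 l, (-1:ℝ) ^ r * (1:ℝ) ^ (l - r) / ((l - r).factorial : ℝ)
      * Tq q r 1 = 0 := by
    apply Finset.sum_eq_zero
    intro r _
    rw [hT r, mul_zero]
  have ht2 : ∑ r ∈ Finset.range (l+1), ((1:ℝ) - 1) ^ (l - r) / ((l - r).factorial : ℝ)
      * Lconst q (r+1) = Lconst q (l+1) := by
    rw [Finset.sum_eq_single l]
    · simp
    · intro r hr hrl
      have : l - r ≠ 0 := by
        have := Nat.lt_succ_iff.mp (Finset.mem_range.mp hr)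
        omega
      rw [sub_self, zero_pow this, zero_div, zero_mul]
    · intro h
      exact absurd (Finset.self_mem_range_succ l) h
  rw [ht1, ht3, ht2, zero_add, add_zero]

lemma LHS_one (hq0 : 0 < q) (hq1 : q < 1) (l : ℕ) :
    Li (l+1) (q ^ (1:ℝ)) / (Real.log q) ^ l = Lconst q (l+1) := by
  rw [Real.rpow_one]
  cases l with
  | zero =>
    rw [pow_zero, div_one]
    have : |q| < 1 := by rw [abs_of_pos hq0]; exact hq1
    rw [Li1_eq this]
    rfl
  | succ m => rfl

theorem main (hq0 : 0 < q) (hq1 : q < 1) {z : ℝ} (hz : 0 < z) (l : ℕ) :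
    Li (l+1) (q ^ z) / (Real.log q) ^ l = Rhs q l z := by
  induction l generalizing z hz with
  | zero =>
    have hqz0 : 0 < q ^ z := Real.rpow_pos_of_pos hq0 z
    have hqz1 : q ^ z < 1 := Real.rpow_lt_one hq0.le hq1 hz
    rw [pow_zero, div_one, Rhs]
    have habs : |q ^ z| < 1 := by rw [abs_of_pos hqz0]; exact hqz1
    rw [Li1_eq habs]
    have h3 : Finset.Icc 1 0 = (∅ : Finset ℕ) := rfl
    rw [h3, Finset.sum_empty, add_zero, Finset.sum_range_one]
    rw [Real.log_div (by linarith) (by linarith),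
      show Lconst q 1 = -Real.log (1-q) from rfl]
    norm_num
    ring
  | succ m ih =>
    have hlogne : Real.log q ≠ 0 := ne_of_lt (Real.log_neg hq0 hq1)
    set F : ℝ → ℝ := fun z => Li (m+1+1) (q ^ z) / (Real.log q) ^ (m+1) - Rhs q (m+1) z
      with hF
    have hd : ∀ x ∈ Set.Ioi (0:ℝ), HasDerivAt F 0 x := by
      intro x hx
      rw [Set.mem_Ioi] at hx
      have h1 := (hasDerivAt_Li_rpow hq0 hq1 (m+1) hx).div_const ((Real.log q) ^ (m+1))
      have h2 : Real.log q * Li (m+1) (q ^ x) / (Real.log q) ^ (m+1) = Rhs q m x := by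
        rw [← ih hx, pow_succ]
        field_simp
      rw [h2] at h1
      have := h1.sub (hasDerivAt_Rhs hq0 hq1 m hx)
      rw [sub_self] at this
      exact this
    have hcst := const_of_hasDerivAt_zero hd hz
    have hF1 : F 1 = 0 := by
      rw [hF]
      simp only
      rw [LHS_one hq0 hq1 (m+1), Rhs_one hq0 hq1 (m+1), sub_self]
    have hFz : F z = 0 := by rw [hcst, hF1]
    have := sub_eq_zero.mp hFz
    exact this

end PLaux

/-- Expression of `Li_{l+1}(q^z)/(log q)^l` in terms of the constants `L_{r+1}` and the
integrals `T_r(z)`, for `0 < q < 1` and `z > 0`. -/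
theorem polylog_qz_eq (q z : ℝ) (hq0 : 0 < q) (hq1 : q < 1) (hz : 0 < z) (l : ℕ) :
    Li (l+1) (q ^ z) / (Real.log q) ^ l =
      z ^ l / l.factorial * Real.log ((1 - q) / (1 - q ^ z))
      + (∑ r ∈ Finset.range (l+1), (z - 1) ^ (l - r) / (l - r).factorial * Lconst q (r+1))
      + ∑ r ∈ Finset.Icc 1 l, (-1:ℝ) ^ r * z ^ (l - r) / (l - r).factorial * Tq q r z := by
  exact PLaux.main hq0 hq1 hz l

end
end

section
/- Let 0 < q < 1, let z > 0 be real, and let n ≥ 0 be an integer. Then ∫_1^z ξ^n·(q^ξ log q/(1−q^ξ)) dξ = Σ_{r=0}^{n} (n!·(−1)^r/(n−r)!)·(1/(log q)^r)·[z^{n−r}·Li_{r+1}(q^z) − Li_{r+1}(q)]. -/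
open scoped BigOperators

noncomputable section

/-- The "shifted" series `Σ_{k≥0} w^k/(k+1)^r`, so that `w * Dld r w = Li r w`. -/
def Dld (r : ℕ) (w : ℝ) : ℝ := ∑' k : ℕ, w ^ k / ((k:ℝ)+1) ^ r

lemma Li_eq_mul_Dld (r : ℕ) (w : ℝ) : Li r w = w * Dld r w := by
  rw [Li, Dld, ← tsum_mul_left]
  exact tsum_congr fun k => by ring

lemma Dld_zero_eq {w : ℝ} (h0 : 0 ≤ w) (h1 : w < 1) : Dld 0 w = (1 - w)⁻¹ := by
  rw [Dld]
  simp only [pow_zero, div_one]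
  exact tsum_geometric_of_lt_one h0 h1

lemma hasDerivAt_Li (r : ℕ) {w : ℝ} (hw : |w| < 1) :
    HasDerivAt (fun x => Li (r+1) x) (Dld r w) w := by
  set c : ℝ := (|w| + 1) / 2 with hc
  have hc0 : 0 < c := by positivity
  have hc1 : c < 1 := by rw [hc]; linarith
  have hwc : |w| < c := by rw [hc]; linarith
  have key := hasDerivAt_tsum_of_isPreconnected
    (u := fun k : ℕ => c ^ k)
    (g := fun (k : ℕ) (x : ℝ) => x ^ (k+1) / ((k:ℝ)+1) ^ (r+1))
    (g' := fun (k : ℕ) (x : ℝ) => x ^ k / ((k:ℝ)+1) ^ r)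
    (t := Metric.ball (0:ℝ) c) (y₀ := (0:ℝ)) (y := w)
    (summable_geometric_of_lt_one hc0.le hc1)
    Metric.isOpen_ball ((convex_ball (0:ℝ) c).isPreconnected)
    ?_ ?_ (Metric.mem_ball_self hc0) ?_ ?_
  · have heq : (fun x : ℝ => Li (r+1) x)
        = fun x : ℝ => ∑' k : ℕ, x ^ (k+1) / ((k:ℝ)+1) ^ (r+1) := by
      funext x; rw [Li]
    rw [heq, Dld]
    exact key
  · intro k y _
    have hk : ((k:ℝ) + 1) ≠ 0 := by positivity
    have h := (hasDerivAt_pow (k+1) y).div_const (((k:ℝ)+1) ^ (r+1))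
    convert h using 1
    · rfl
    push_cast
    field_simp
    ring
  · intro k y hy
    rw [Metric.mem_ball, Real.dist_eq, sub_zero] at hy
    have h1 : ((1:ℝ) ≤ ((k:ℝ)+1) ^ r) :=
      one_le_pow₀ (by linarith [Nat.cast_nonneg (α := ℝ) k])
    rw [Real.norm_eq_abs, abs_div, abs_pow,
      abs_of_pos (show (0:ℝ) < ((k:ℝ)+1) ^ r by positivity)]
    calc |y| ^ k / ((k:ℝ)+1) ^ r ≤ |y| ^ k :=
          div_le_self (pow_nonneg (abs_nonneg y) k) h1
      _ ≤ c ^ k := pow_le_pow_left₀ (abs_nonneg y) hy.le k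
  · simpa using (summable_zero : Summable fun _ : ℕ => (0:ℝ))
  · rw [Metric.mem_ball, Real.dist_eq, sub_zero]
    exact hwc

/-- Evaluation of `∫_1^z ξ^n·(q^ξ log q/(1−q^ξ))dξ` in terms of polylogarithms,
for `0 < q < 1`, `z > 0` and `n ≥ 0`. -/
theorem integral_pow_qlog_eq (q z : ℝ) (hq0 : 0 < q) (hq1 : q < 1) (hz : 0 < z) (n : ℕ) :
    (∫ ξ in (1:ℝ)..z, ξ ^ n * (q ^ ξ * Real.log q / (1 - q ^ ξ))) =
      ∑ r ∈ Finset.range (n+1),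
        (n.factorial : ℝ) * (-1:ℝ) ^ r / (n - r).factorial * (1 / (Real.log q) ^ r) *
          (z ^ (n - r) * Li (r+1) (q ^ z) - Li (r+1) q) := by
  set L := Real.log q with hLdef
  have hL : L < 0 := Real.log_neg hq0 hq1
  have hL0 : L ≠ 0 := ne_of_lt hL
  set a : ℕ → ℝ := fun r =>
    (n.factorial : ℝ) * (-1:ℝ) ^ r / ((n - r).factorial : ℝ) * (1 / L ^ r) with ha
  -- the antiderivative
  set F : ℝ → ℝ := fun t => ∑ r ∈ Finset.range (n+1),
    a r * (t ^ (n - r) * Li (r+1) (q ^ t)) with hF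
  have hderiv : ∀ ξ ∈ Set.uIcc (1:ℝ) z,
      HasDerivAt F (ξ ^ n * (q ^ ξ * L / (1 - q ^ ξ))) ξ := by
    intro ξ hξ
    have hξ0 : 0 < ξ := lt_of_lt_of_le (lt_min one_pos hz) hξ.1
    have hw0 : 0 < q ^ ξ := Real.rpow_pos_of_pos hq0 ξ
    have hw1 : q ^ ξ < 1 := Real.rpow_lt_one hq0.le hq1 hξ0
    have habs : |q ^ ξ| < 1 := by rw [abs_of_pos hw0]; exact hw1
    have hq' : HasDerivAt (fun t : ℝ => q ^ t) (q ^ ξ * L) ξ :=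
      (Real.hasStrictDerivAt_const_rpow hq0 ξ).hasDerivAt
    have hterm : ∀ r ∈ Finset.range (n+1),
        HasDerivAt (fun t => a r * (t ^ (n - r) * Li (r+1) (q ^ t)))
          (a r * ((↑(n - r) * ξ ^ (n - r - 1)) * Li (r+1) (q ^ ξ)
                  + ξ ^ (n - r) * (Dld r (q ^ ξ) * (q ^ ξ * L)))) ξ := by
      intro r _
      exact ((hasDerivAt_pow (n - r) ξ).mul
        (((hasDerivAt_Li r habs).comp ξ hq'))).const_mul (a r)
    have hsum := HasDerivAt.fun_sum hterm
    convert hsum using 1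
    · rfl
    · rfl
    -- now the algebraic identity
    set w : ℝ := q ^ ξ
    have h1w : 1 - w ≠ 0 := sub_ne_zero.mpr (ne_of_lt hw1).symm
    have hsplit : ∀ r, a r * ((↑(n - r) * ξ ^ (n - r - 1)) * Li (r+1) w
            + ξ ^ (n - r) * (Dld r w * (w * L)))
        = a r * ((↑(n - r) * ξ ^ (n - r - 1)) * Li (r+1) w)
          + a r * (ξ ^ (n - r) * (Dld r w * (w * L))) := fun r => by ring
    rw [Finset.sum_congr rfl fun r _ => hsplit r, Finset.sum_add_distrib,
      Finset.sum_range_succ (fun r => a r * ((↑(n - r) * ξ ^ (n - r - 1)) * Li (r+1) w)),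
      Finset.sum_range_succ' (fun r => a r * (ξ ^ (n - r) * (Dld r w * (w * L))))]
    have hPn : a n * ((↑(n - n) * ξ ^ (n - n - 1)) * Li (n+1) w) = 0 := by
      simp
    have hQ0 : a 0 * (ξ ^ (n - 0) * (Dld 0 w * (w * L)))
        = ξ ^ n * (w * L / (1 - w)) := by
      have ha0 : a 0 = 1 := by
        rw [ha]
        simp [Nat.factorial_ne_zero, div_self,
          (Nat.cast_ne_zero (R := ℝ)).mpr (Nat.factorial_ne_zero n)]
      rw [ha0, Dld_zero_eq hw0.le hw1, Nat.sub_zero]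
      field_simp
    have hcancel : ∀ r ∈ Finset.range n,
        a r * ((↑(n - r) * ξ ^ (n - r - 1)) * Li (r+1) w)
          + a (r+1) * (ξ ^ (n - (r+1)) * (Dld (r+1) w * (w * L))) = 0 := by
      intro r hr
      have hrn : r < n := Finset.mem_range.mp hr
      obtain ⟨m, h1⟩ : ∃ m, n - r = m + 1 := ⟨n - (r+1), by omega⟩
      have h2 : n - r - 1 = m := by omega
      have h3 : n - (r+1) = m := by omega
      have hmf : (m.factorial : ℝ) ≠ 0 :=
        (Nat.cast_ne_zero (R := ℝ)).mpr (Nat.factorial_ne_zero m)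
      have hm1 : ((m : ℝ) + 1) ≠ 0 := by positivity
      rw [Li_eq_mul_Dld (r+1) w]
      simp only [ha, h2, h3, h1, Nat.factorial_succ]
      push_cast
      field_simp
      ring
    rw [hPn, hQ0]
    have hzero := Finset.sum_eq_zero hcancel
    rw [Finset.sum_add_distrib] at hzero
    linarith
  have hcont : ContinuousOn (fun ξ : ℝ => ξ ^ n * (q ^ ξ * L / (1 - q ^ ξ)))
      (Set.uIcc (1:ℝ) z) := by
    have hrpow : Continuous fun ξ : ℝ => q ^ ξ :=
      continuous_iff_continuousAt.mpr fun x => Real.continuousAt_const_rpow (ne_of_gt hq0)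
    apply ContinuousOn.mul (continuous_pow n).continuousOn
    apply ContinuousOn.div ((hrpow.mul continuous_const).continuousOn)
      ((continuous_const.sub hrpow).continuousOn)
    intro x hx
    have hx0 : 0 < x := lt_of_lt_of_le (lt_min one_pos hz) hx.1
    have : q ^ x < 1 := Real.rpow_lt_one hq0.le hq1 hx0
    exact sub_ne_zero.mpr (ne_of_lt this).symm
  have hFTC := intervalIntegral.integral_eq_sub_of_hasDerivAt hderiv
    (hcont.intervalIntegrable)
  rw [hFTC, hF]
  rw [← Finset.sum_sub_distrib]
  apply Finset.sum_congr rfl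
  intro r _
  rw [Real.rpow_one, one_pow, one_mul, ← mul_sub]
end
end

section
/- Let n ≥ 1. For every z ∈ ℂ: C(z+1,n) + Σ_{j=0}^{n−1} G_{n,j}(z)·B_{j+1}/(j+1) = Σ_{j=0}^{n−1} G_{n,j}(z)·B_{j+1}(z+1)/(j+1). -/
open scoped BigOperators

noncomputable section

/-- Generalized binomial coefficient `C(x,m) = x(x-1)⋯(x-m+1)/m!`. -/
def genBinom (x : ℂ) (m : ℕ) : ℂ := (∏ i ∈ Finset.range m, (x - i)) / m.factorial

/-- Bernoulli number `B_r` (with `B_1 = -1/2`), as a complex number. -/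
def BC (r : ℕ) : ℂ := ((bernoulli r : ℚ) : ℂ)

/-- Bernoulli polynomial `B_m(x)` evaluated at a complex number. -/
def BPC (m : ℕ) (x : ℂ) : ℂ := Polynomial.aeval x (Polynomial.bernoulli m)

/-- `G_{n,j}(z)`: the coefficient of `u^j` in `C(z−u, n−1)`. -/
def Gcoef (n j : ℕ) (z : ℂ) : ℂ :=
  iteratedDeriv j (fun u => genBinom (z - u) (n-1)) 0 / j.factorial

/-!
For fixed `z`, the polynomial `f(u) = Σ_j G_{n,j}(z) B_{j+1}(u)/(j+1) + C(z+1−u, n)` is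
1-periodic: since `B_{j+1}(u+1) − B_{j+1}(u) = (j+1) u^j`, the first part increases by
`Σ_j G_{n,j}(z) u^j = C(z−u, n−1)` from `u` to `u+1`, and by Pascal's rule the second part
decreases by the same amount. A periodic polynomial is constant, so `f(z+1) = f(0)`, which is
the identity because `C(0, n) = 0` for `n ≥ 1`.
-/

open Polynomial Nat

namespace Polynomial

theorem iteratedDeriv_eval {𝕜 : Type*} [NontriviallyNormedField 𝕜] (p : 𝕜[X]) (j : ℕ) :
    iteratedDeriv j (fun x => p.eval x) = fun x => (derivative^[j] p).eval x := by
  induction j generalizing p with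
  | zero => simp
  | succ j ih =>
    rw [iteratedDeriv_succ', Function.iterate_succ_apply, ← ih]
    exact congrArg _ (_root_.funext fun _ => p.deriv)

theorem iteratedDeriv_eval_zero {𝕜 : Type*} [NontriviallyNormedField 𝕜] (p : 𝕜[X]) (j : ℕ) :
    iteratedDeriv j (fun x => p.eval x) 0 = j ! * p.coeff j := by
  simp only [iteratedDeriv_eval]
  rw [← coeff_zero_eq_eval_zero, coeff_iterate_derivative, zero_add, descFactorial_self,
    nsmul_eq_mul]

theorem eval_eq_eval_zero_of_periodic {R : Type*} [CommRing R] [IsDomain R] [CharZero R]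
    {p : R[X]} (h : Function.Periodic (fun x => p.eval x) 1) (x : R) : p.eval x = p.eval 0 := by
  have hnat : ∀ k : ℕ, p.eval (k : R) = p.eval 0 := by
    intro k
    induction k with
    | zero => simp
    | succ k ih => rw [cast_succ]; exact (h k).trans ih
  suffices p = C (p.eval 0) by rw [this, eval_C, eval_C]
  refine eq_of_infinite_eval_eq _ _ (Set.infinite_of_injective_forall_mem cast_injective ?_)
  simp [hnat]

end Polynomial

theorem genBinom_eq_choose (x : ℂ) (m : ℕ) : genBinom x m = Ring.choose x m := by
  rw [Ring.choose_eq_smul, genBinom, ← descPochhammer_eval_eq_prod_range, smul_eq_mul,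
    div_eq_inv_mul, ← aeval_eq_smeval, ← descPochhammer_map (algebraMap ℤ ℂ), eval_map_algebraMap]

theorem genBinom_succ_succ (x : ℂ) (m : ℕ) :
    genBinom (x + 1) (m + 1) = genBinom x m + genBinom x (m + 1) := by
  simp only [genBinom_eq_choose, Ring.choose_succ_succ]

theorem genBinom_zero_of_pos {m : ℕ} (hm : 0 < m) : genBinom 0 m = 0 := by
  rw [genBinom_eq_choose, Ring.choose_zero_pos ℂ hm]

def choosePoly (m : ℕ) : ℂ[X] := C ((m ! : ℂ)⁻¹) * descPochhammer ℂ m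

theorem eval_choosePoly (m : ℕ) (x : ℂ) : (choosePoly m).eval x = genBinom x m := by
  rw [choosePoly, eval_mul, eval_C, descPochhammer_eval_eq_prod_range, genBinom, inv_mul_eq_div]

theorem natDegree_choosePoly_le (m : ℕ) : (choosePoly m).natDegree ≤ m :=
  natDegree_C_mul_le _ _ |>.trans (descPochhammer_natDegree ℂ m).le

theorem Gcoef_eq_coeff (n j : ℕ) (z : ℂ) :
    Gcoef n j z = ((choosePoly (n - 1)).comp (C z - X)).coeff j := by
  have hpoly : (fun u => genBinom (z - u) (n - 1)) =
      fun u => ((choosePoly (n - 1)).comp (C z - X)).eval u := by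
    simp [eval_choosePoly]
  rw [Gcoef, hpoly, iteratedDeriv_eval_zero,
    mul_div_cancel_left₀ _ (cast_ne_zero.2 (factorial_ne_zero j))]

theorem sum_Gcoef_mul_pow {n : ℕ} (hn : 1 ≤ n) (z u : ℂ) :
    ∑ j ∈ Finset.range n, Gcoef n j z * u ^ j = genBinom (z - u) (n - 1) := by
  have hdeg : ((choosePoly (n - 1)).comp (C z - X)).natDegree < n := by
    refine natDegree_comp_le.trans_lt ?_
    have hlin : (C z - X).natDegree ≤ 1 := by compute_degree!
    have := Nat.mul_le_mul (natDegree_choosePoly_le (n - 1)) hlin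
    omega
  simp only [Gcoef_eq_coeff, ← eval_eq_sum_range' hdeg, eval_comp, eval_sub, eval_C, eval_X,
    eval_choosePoly]

theorem BPC_one_add (m : ℕ) (x : ℂ) : BPC m (1 + x) = BPC m x + m * x ^ (m - 1) := by
  simpa [BPC, aeval_comp] using congr(aeval x $(bernoulli_comp_one_add_X m))

theorem BPC_zero_right (m : ℕ) : BPC m 0 = BC m := by
  simp [BPC, BC, aeval_def, eval₂_at_zero, ← coeff_zero_eq_eval_zero, ← bernoulli_eval_zero]

theorem sum_mul_BPC_add_one (c : ℕ → ℂ) (n : ℕ) (x : ℂ) :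
    ∑ j ∈ Finset.range n, c j * BPC (j + 1) (x + 1) / (j + 1) =
      ∑ j ∈ Finset.range n, c j * BPC (j + 1) x / (j + 1) + ∑ j ∈ Finset.range n, c j * x ^ j := by
  rw [← Finset.sum_add_distrib]
  refine Finset.sum_congr rfl fun j _ => ?_
  rw [add_comm x, BPC_one_add]
  field_simp
  push_cast
  ring

/-- `C(z+1,n) + Σ_{j=0}^{n−1} G_{n,j}(z)·B_{j+1}/(j+1) =
Σ_{j=0}^{n−1} G_{n,j}(z)·B_{j+1}(z+1)/(j+1)`. -/
theorem genBinom_add_sum_bernoulli (n : ℕ) (hn : 1 ≤ n) (z : ℂ) :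
    genBinom (z+1) n + ∑ j ∈ Finset.range n, Gcoef n j z * BC (j+1) / ((j:ℂ)+1) =
      ∑ j ∈ Finset.range n, Gcoef n j z * BPC (j+1) (z+1) / ((j:ℂ)+1) := by
  set f : ℂ → ℂ := fun u =>
    ∑ j ∈ Finset.range n, Gcoef n j z * BPC (j + 1) u / (j + 1) + genBinom (z + 1 - u) n
  set D : ℂ[X] := ∑ j ∈ Finset.range n, C (Gcoef n j z / (j + 1)) *
      (Polynomial.bernoulli (j + 1)).map (algebraMap ℚ ℂ) + (choosePoly n).comp (C (z + 1) - X)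
  have hD : (fun u => D.eval u) = f := by
    ext u
    simp [D, f, eval_finsetSum, eval_map_algebraMap, BPC, eval_choosePoly, div_mul_eq_mul_div]
  have hf : Function.Periodic f 1 := by
    intro u
    obtain ⟨m, rfl⟩ : ∃ m, n = m + 1 := ⟨n - 1, by omega⟩
    simp only [f, sum_mul_BPC_add_one, sum_Gcoef_mul_pow hn, Nat.add_sub_cancel,
      show z + 1 - u = z - u + 1 by ring, show z + 1 - (u + 1) = z - u by ring, genBinom_succ_succ]
    ring
  have key := eval_eq_eval_zero_of_periodic (hD ▸ hf) (z + 1)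
  simp only [congrFun hD, f, sub_self, sub_zero, genBinom_zero_of_pos hn, BPC_zero_right,
    add_zero] at key
  rw [key, add_comm]

end
end
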